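/- For N ≥ 1, the entire function G_N defined by G_N(s) = 1 + Σ_{m=1}^∞ (-1)^m s^{2m} / (2^m m! ∏_{k=1}^m (N + 2(k-1))) is bounded on the real line: there exists M_N > 0 such that |G_N(s)| ≤ M_N for all s ∈ ℝ. -/

import Mathlib

set_option autoImplicit false

/-- The Frobenius power-series solution `G_N` of the spherical-mean ODE. -/
noncomputable def G (N : ℕ) (s : ℝ) : ℝ :=
  ∑' m : ℕ, ((-1) ^ m * s ^ (2 * m)) /
    ((2 : ℝ) ^ m * (Nat.factorial m) * ∏ k ∈ Finset.range m, ((N : ℝ) + 2 * k))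

/-!
Termwise integration of the series gives `G₁ = cos`, Bessel's integral
`G₂(s) = π⁻¹ ∫₀^π cos (s sin θ) dθ` (the coefficients come from Wallis' integrals of `sin^{2m}`),
and the recursion `G_{N+2}(s) = N ∫₀¹ u^{N-1} G_N(su) du`. Since `N ∫₀¹ u^{N-1} du = 1`, the
recursion expresses `G_{N+2}(s)` as an average of values of `G_N`, so `|G_N| ≤ 1` for all `N ≥ 1`
by induction in steps of two.
-/

open Finset Real

theorem intervalIntegral.integral_tsum_of_norm_le {a b : ℝ} {f : ℕ → ℝ → ℝ} {u : ℕ → ℝ}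
    (hf : ∀ m, Continuous (f m)) (hu : Summable u) (hfu : ∀ m, ∀ x ∈ Set.uIoc a b, ‖f m x‖ ≤ u m) :
    ∫ x in a..b, ∑' m, f m x = ∑' m, ∫ x in a..b, f m x :=
  (intervalIntegral.hasSum_integral_of_dominated_convergence (fun m _ => u m)
    (fun m => (hf m).aestronglyMeasurable) (fun m => .of_forall (hfu m))
    (.of_forall fun _ _ => hu) intervalIntegrable_const
    (.of_forall fun x hx => (hu.of_norm_bounded fun m => hfu m x hx).hasSum)).tsum_eq.symm

theorem abs_intervalIntegral_pow_mul_le {g : ℝ → ℝ} {C : ℝ} (hg : ∀ x, |g x| ≤ C) (n : ℕ) :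
    |∫ u in (0 : ℝ)..1, u ^ n * g u| ≤ C / (n + 1) := by
  have hbound : ∀ᵐ u, u ∈ Set.Ioc (0 : ℝ) 1 → ‖u ^ n * g u‖ ≤ C * u ^ n := by
    refine .of_forall fun u hu => ?_
    rw [norm_mul, norm_of_nonneg (pow_nonneg hu.1.le n), mul_comm]
    exact mul_le_mul_of_nonneg_right (hg u) (pow_nonneg hu.1.le n)
  calc |∫ u in (0 : ℝ)..1, u ^ n * g u|
      ≤ ∫ u in (0 : ℝ)..1, C * u ^ n :=
        intervalIntegral.norm_integral_le_of_norm_le zero_le_one hbound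
          (by apply Continuous.intervalIntegrable; fun_prop)
    _ = C / (n + 1) := by simp [integral_pow, div_eq_mul_inv]

namespace G

noncomputable def denom (N m : ℕ) : ℝ :=
  2 ^ m * m.factorial * ∏ k ∈ range m, ((N : ℝ) + 2 * k)

noncomputable def term (N : ℕ) (s : ℝ) (m : ℕ) : ℝ :=
  (-1) ^ m * s ^ (2 * m) / denom N m

theorem eq_tsum_term (N : ℕ) (s : ℝ) : G N s = ∑' m, term N s m := rfl

theorem factorial_le_denom {N : ℕ} (hN : 1 ≤ N) (m : ℕ) : (m.factorial : ℝ) ≤ denom N m := by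
  have hN' : (1 : ℝ) ≤ N := by exact_mod_cast hN
  have hprod : 1 ≤ ∏ k ∈ range m, ((N : ℝ) + 2 * k) :=
    one_le_prod fun k _ => by linarith [(k.cast_nonneg : (0 : ℝ) ≤ k)]
  calc (m.factorial : ℝ) = 1 * m.factorial * 1 := by ring
    _ ≤ denom N m := by unfold denom; gcongr; exact one_le_pow₀ one_le_two

theorem denom_pos {N : ℕ} (hN : 1 ≤ N) (m : ℕ) : 0 < denom N m :=
  (Nat.cast_pos.2 m.factorial_pos).trans_le (factorial_le_denom hN m)

theorem abs_term_le {N : ℕ} (hN : 1 ≤ N) {s R : ℝ} (hs : |s| ≤ R) (m : ℕ) :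
    |term N s m| ≤ (R ^ 2) ^ m / m.factorial := by
  rw [term, abs_div, abs_mul, abs_pow, abs_neg, abs_one, one_pow, one_mul,
    abs_of_pos (denom_pos hN m), abs_pow, pow_mul, sq_abs]
  exact div_le_div₀ (by positivity) (pow_le_pow_left₀ (sq_nonneg s)
    (sq_abs s ▸ pow_le_pow_left₀ (abs_nonneg s) hs 2) m)
    (Nat.cast_pos.2 m.factorial_pos) (factorial_le_denom hN m)

theorem continuous_term (N m : ℕ) : Continuous fun s => term N s m := by
  unfold term; fun_prop

theorem denom_one (m : ℕ) : denom 1 m = (2 * m).factorial := by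
  induction m with
  | zero => simp [denom]
  | succ m ih =>
    rw [show 2 * (m + 1) = 2 * m + 1 + 1 by ring, Nat.factorial_succ, Nat.factorial_succ]
    push_cast
    rw [← ih]
    simp only [denom, prod_range_succ, pow_succ, Nat.factorial_succ]
    push_cast
    ring

theorem denom_add_two (N m : ℕ) : N * denom (N + 2) m = (N + 2 * m) * denom N m := by
  have hshift := (prod_range_succ' (fun k : ℕ => (N : ℝ) + 2 * k) m).symm.trans
    (prod_range_succ _ m)
  have hcongr : ∏ k ∈ range m, (((N + 2 : ℕ) : ℝ) + 2 * k)
      = ∏ k ∈ range m, ((N : ℝ) + 2 * ((k : ℝ) + 1)) :=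
    prod_congr rfl fun k _ => by push_cast; ring
  simp only [denom, hcongr]
  push_cast at hshift
  linear_combination (2 ^ m * m.factorial : ℝ) * hshift

theorem term_one_mul_prod (s : ℝ) (m : ℕ) :
    term 1 s m * ∏ i ∈ range m, (2 * (i : ℝ) + 1) / (2 * i + 2) = term 2 s m := by
  have h1 : ∏ k ∈ range m, (((1 : ℕ) : ℝ) + 2 * k) = ∏ k ∈ range m, (2 * (k : ℝ) + 1) :=
    prod_congr rfl fun k _ => by push_cast; ring
  have h2 : ∏ k ∈ range m, (((2 : ℕ) : ℝ) + 2 * k) = ∏ k ∈ range m, (2 * (k : ℝ) + 2) :=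
    prod_congr rfl fun k _ => by push_cast; ring
  simp only [term, denom, h1, h2, prod_div_distrib]
  have hP₁ : 0 < ∏ k ∈ range m, (2 * (k : ℝ) + 1) := prod_pos fun k _ => by positivity
  have hP₂ : 0 < ∏ k ∈ range m, (2 * (k : ℝ) + 2) := prod_pos fun k _ => by positivity
  generalize ∏ k ∈ range m, (2 * (k : ℝ) + 1) = P₁ at *
  generalize ∏ k ∈ range m, (2 * (k : ℝ) + 2) = P₂ at *
  field_simp

theorem one_eq_cos : G 1 = cos := by
  ext s
  rw [eq_tsum_term, cos_eq_tsum]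
  simp only [term, denom_one]

theorem two_eq_integral (s : ℝ) : G 2 s = π⁻¹ * ∫ x in (0 : ℝ)..π, cos (s * sin x) := by
  have hswap : ∫ x in (0 : ℝ)..π, cos (s * sin x)
      = ∑' m, ∫ x in (0 : ℝ)..π, term 1 (s * sin x) m := by
    simp only [← one_eq_cos, eq_tsum_term]
    refine intervalIntegral.integral_tsum_of_norm_le
      (fun m => (continuous_term 1 m).comp (by fun_prop))
      (summable_pow_div_factorial (|s| ^ 2)) fun m x _ => abs_term_le le_rfl ?_ m
    rw [abs_mul]
    exact mul_le_of_le_one_right (abs_nonneg s) (abs_sin_le_one x)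
  have hterm : ∀ m, ∫ x in (0 : ℝ)..π, term 1 (s * sin x) m = π * term 2 s m := by
    intro m
    have hfactor : ∀ x, term 1 (s * sin x) m = term 1 s m * sin x ^ (2 * m) := fun x => by
      simp only [term, mul_pow]; ring
    simp_rw [hfactor]
    rw [intervalIntegral.integral_const_mul, integral_sin_pow_even, ← term_one_mul_prod]
    ring
  rw [hswap, tsum_congr hterm, tsum_mul_left, ← mul_assoc, inv_mul_cancel₀ pi_ne_zero, one_mul,
    eq_tsum_term]

theorem term_add_two {N : ℕ} (hN : 1 ≤ N) (s : ℝ) (m : ℕ) :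
    term (N + 2) s m = N * (term N s m / (N + 2 * m)) := by
  have hd := denom_pos hN m
  have hd₂ := denom_pos (N := N + 2) (by omega) m
  have hN' : (0 : ℝ) < N := by exact_mod_cast hN
  simp only [term]
  field_simp
  linear_combination (-s ^ (2 * m)) * denom_add_two N m

theorem add_two_eq_integral {N : ℕ} (hN : 1 ≤ N) (s : ℝ) :
    G (N + 2) s = N * ∫ u in (0 : ℝ)..1, u ^ (N - 1) * G N (s * u) := by
  have hswap : ∫ u in (0 : ℝ)..1, u ^ (N - 1) * G N (s * u)
      = ∑' m, ∫ u in (0 : ℝ)..1, u ^ (N - 1) * term N (s * u) m := by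
    simp only [eq_tsum_term, ← tsum_mul_left]
    refine intervalIntegral.integral_tsum_of_norm_le
      (fun m => by have := continuous_term N m; fun_prop)
      (summable_pow_div_factorial (|s| ^ 2)) fun m u hu => ?_
    rw [Set.uIoc_of_le zero_le_one] at hu
    have hu1 : |u| ≤ 1 := abs_le.2 ⟨by linarith [hu.1], hu.2⟩
    simp only [norm_mul, norm_pow, norm_eq_abs]
    refine (mul_le_of_le_one_left (abs_nonneg _) (pow_le_one₀ (abs_nonneg u) hu1)).trans
      (abs_term_le hN ?_ m)
    rw [abs_mul]
    exact mul_le_of_le_one_right (abs_nonneg s) hu1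
  have hterm : ∀ m,
      ∫ u in (0 : ℝ)..1, u ^ (N - 1) * term N (s * u) m = term N s m / (N + 2 * m) := by
    intro m
    have hfactor : ∀ u : ℝ, u ^ (N - 1) * term N (s * u) m = term N s m * u ^ (N - 1 + 2 * m) :=
      fun u => by simp only [term, mul_pow, pow_add]; ring
    simp only [hfactor, intervalIntegral.integral_const_mul, integral_pow]
    rw [one_pow, zero_pow (Nat.succ_ne_zero _), sub_zero]
    push_cast [Nat.cast_sub hN]
    ring
  rw [hswap, tsum_congr hterm, ← tsum_mul_left, eq_tsum_term, tsum_congr (term_add_two hN s)]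

theorem abs_two_le_one (s : ℝ) : |G 2 s| ≤ 1 := by
  have hint : ‖∫ x in (0 : ℝ)..π, cos (s * sin x)‖ ≤ 1 * |π - 0| :=
    intervalIntegral.norm_integral_le_of_norm_le_const fun x _ => abs_cos_le_one _
  rw [two_eq_integral, abs_mul, abs_inv, abs_of_pos pi_pos]
  rw [norm_eq_abs, one_mul, sub_zero, abs_of_pos pi_pos] at hint
  exact inv_mul_le_one_of_le₀ hint pi_pos.le

theorem abs_add_two_le_one {N : ℕ} (hN : 1 ≤ N) (hG : ∀ s, |G N s| ≤ 1) (s : ℝ) :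
    |G (N + 2) s| ≤ 1 := by
  have hint := abs_intervalIntegral_pow_mul_le (fun u => hG (s * u)) (N - 1)
  rw [Nat.cast_sub hN, Nat.cast_one, sub_add_cancel] at hint
  rw [add_two_eq_integral hN, abs_mul, Nat.abs_cast]
  calc (N : ℝ) * |∫ u in (0 : ℝ)..1, u ^ (N - 1) * G N (s * u)| ≤ N * (1 / N) := by gcongr
    _ ≤ 1 := by rw [mul_one_div]; exact div_self_le_one _

theorem abs_le_one {N : ℕ} (hN : 1 ≤ N) (s : ℝ) : |G N s| ≤ 1 := by
  have hpair : ∀ n : ℕ, (∀ s, |G (n + 1) s| ≤ 1) ∧ ∀ s, |G (n + 2) s| ≤ 1 := by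
    intro n
    induction n with
    | zero => exact ⟨fun s => one_eq_cos ▸ abs_cos_le_one s, abs_two_le_one⟩
    | succ n ih => exact ⟨ih.2, abs_add_two_le_one (by omega) ih.1⟩
  obtain ⟨n, rfl⟩ := Nat.exists_eq_add_of_le' hN
  exact (hpair n).1 s

end G

/-- `G_N` is bounded on the real line. -/
theorem stmt10 (N : ℕ) (hN : 1 ≤ N) :
    ∃ M : ℝ, 0 < M ∧ ∀ s : ℝ, |G N s| ≤ M :=
  ⟨1, one_pos, G.abs_le_one hN⟩
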